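/- Let m_w, m_z be positive integers, s_w, s_z > 0, and let W, Z be independent random variables, Gamma-distributed with shapes m_w, m_z and scales s_w, s_z respectively. Then for any theta > 0: P( W > theta*(Z + 1) ) = exp( - theta/s_w ) * sum_{k=0}^{m_w-1} [ (theta/s_w)^k / k! ] * sum_{k1=0}^{k} C(k,k1) * [ Gamma(m_z + k1) / (Gamma(m_z) * s_z^{m_z}) ] * ( theta/s_w + 1/s_z )^{-(m_z+k1)}, where C(k,k1) denotes the binomial coefficient and Gamma is the Gamma function. -/

import Mathlib

/-!
Conditioning on `Z`, the probability is `E[S(θ(Z + 1))]`, where for integer shape the survival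
function of `W` is `S(x) = e^(-x/s_w) ∑_{k<m_w} (x/s_w)^k / k!` (its derivative telescopes to
minus the density). Expanding `(Z + 1)^k` binomially leaves the Gamma moments
`E[Z^i e^(-cZ)] = Γ(m_z + i) / (Γ(m_z) s_z^m_z (c + 1/s_z)^(m_z + i))`.
-/

open MeasureTheory ProbabilityTheory Real Finset Set Filter Topology
open scoped Nat

lemma hasDerivAt_sum_range_pow_div_factorial (n : ℕ) (t : ℝ) :
    HasDerivAt (fun t : ℝ => ∑ k ∈ range (n + 1), t ^ k / (k ! : ℝ))
      (∑ k ∈ range n, t ^ k / (k ! : ℝ)) t := by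
  induction n with
  | zero => simpa using hasDerivAt_const t (1 : ℝ)
  | succ n ih =>
    rw [sum_range_succ _ n]
    simp only [sum_range_succ _ (n + 1)]
    refine (ih.fun_add ((hasDerivAt_pow (n + 1) t).div_const ((n + 1)! : ℝ))).congr_deriv ?_
    rw [Nat.factorial_succ]
    push_cast
    field_simp

lemma hasDerivAt_exp_neg_mul_sum_range (n : ℕ) (u : ℝ) :
    HasDerivAt (fun t : ℝ => exp (-t) * ∑ k ∈ range (n + 1), t ^ k / (k ! : ℝ))
      (-(exp (-u) * (u ^ n / n !))) u := by
  refine (((hasDerivAt_neg u).exp).mul (hasDerivAt_sum_range_pow_div_factorial n u)).congr_deriv ?_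
  rw [sum_range_succ]
  ring

lemma tendsto_exp_neg_mul_sum_range (m : ℕ) :
    Tendsto (fun t : ℝ => exp (-t) * ∑ k ∈ range m, t ^ k / (k ! : ℝ)) atTop (𝓝 0) := by
  simp_rw [mul_sum]
  rw [← sum_const_zero (s := range m)]
  refine tendsto_finsetSum _ fun k _ => ?_
  have := (tendsto_pow_mul_exp_neg_atTop_nhds_zero k).div_const (k ! : ℝ)
  rw [zero_div] at this
  exact this.congr fun t => by ring

lemma exp_neg_mul_sum_range_add_one (b z : ℝ) (m : ℕ) :
    exp (-(b * (z + 1))) * ∑ k ∈ range m, (b * (z + 1)) ^ k / (k ! : ℝ) =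
      ∑ k ∈ range m, ∑ i ∈ range (k + 1),
        exp (-b) * (b ^ k / k !) * (k.choose i : ℝ) * (z ^ i * exp (-(b * z))) := by
  rw [mul_sum]
  refine sum_congr rfl fun k _ => ?_
  rw [mul_pow, add_pow, mul_sum, sum_div, mul_sum]
  refine sum_congr rfl fun i _ => ?_
  rw [mul_add, neg_add, mul_one, exp_add, one_pow, mul_one]
  ring

namespace ProbabilityTheory

lemma ae_nonneg_gammaMeasure (a r : ℝ) : ∀ᵐ z ∂gammaMeasure a r, 0 ≤ z := by
  have hm : Measurable (gammaPDF a r) := (measurable_gammaPDFReal a r).ennreal_ofReal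
  rw [gammaMeasure, ae_withDensity_iff hm]
  exact ae_of_all _ fun z hz => not_lt.1 fun h => hz (gammaPDF_of_neg h)

lemma gammaMeasure_Ioi_natCast {m : ℕ} (hm : 0 < m) {r x : ℝ} (hr : 0 < r) (hx : 0 ≤ x) :
    gammaMeasure m r (Ioi x) =
      ENNReal.ofReal (exp (-(r * x)) * ∑ k ∈ range m, (r * x) ^ k / (k ! : ℝ)) := by
  obtain ⟨n, rfl⟩ := Nat.exists_eq_add_one_of_ne_zero hm.ne'
  set g : ℝ → ℝ := fun y =>
    -(exp (-(r * y)) * ∑ k ∈ range (n + 1), (r * y) ^ k / (k ! : ℝ))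
  have hderiv : ∀ y ∈ Ici x, HasDerivAt g (gammaPDFReal (n + 1 : ℕ) r y) y := by
    intro y hy
    refine (((hasDerivAt_exp_neg_mul_sum_range n (r * y)).comp y
      ((hasDerivAt_id y).const_mul r)).neg).congr_deriv ?_
    simp only [gammaPDFReal, if_pos (hx.trans hy)]
    rw [rpow_natCast, Nat.cast_add_one, add_sub_cancel_right, rpow_natCast,
      Gamma_nat_eq_factorial]
    ring
  have hpos : ∀ y ∈ Ioi x, 0 ≤ gammaPDFReal (n + 1 : ℕ) r y :=
    fun y _ => gammaPDFReal_nonneg (by positivity) hr y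
  have hlim : Tendsto g atTop (𝓝 0) := by
    simpa using ((tendsto_exp_neg_mul_sum_range (n + 1)).comp
      (tendsto_id.const_mul_atTop hr)).neg
  rw [gammaMeasure, withDensity_apply _ measurableSet_Ioi]
  unfold gammaPDF
  rw [← ofReal_integral_eq_lintegral_ofReal (integrableOn_Ioi_deriv_of_nonneg' hderiv hpos hlim)
      ((ae_restrict_iff' measurableSet_Ioi).2 (ae_of_all _ hpos)),
    integral_Ioi_of_hasDerivAt_of_nonneg' hderiv hpos hlim]
  simp [g]

section Moments

variable {a r : ℝ}

lemma integral_gammaMeasure (ha : 0 < a) (hr : 0 < r) (f : ℝ → ℝ) :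
    ∫ z, f z ∂gammaMeasure a r = ∫ z in Ioi 0, gammaPDFReal a r z * f z := by
  have hm : Measurable (gammaPDF a r) := (measurable_gammaPDFReal a r).ennreal_ofReal
  rw [gammaMeasure, integral_withDensity_eq_integral_toReal_smul hm
      (ae_of_all _ fun _ => ENNReal.ofReal_lt_top), ← integral_Ici_eq_integral_Ioi,
    setIntegral_eq_integral_of_forall_compl_eq_zero fun z hz => by
      simp [gammaPDFReal, show ¬0 ≤ z from hz]]
  simp [gammaPDF, ENNReal.toReal_ofReal (gammaPDFReal_nonneg ha hr _)]

lemma integrable_gammaMeasure_iff (ha : 0 < a) (hr : 0 < r) {f : ℝ → ℝ} :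
    Integrable f (gammaMeasure a r) ↔
      IntegrableOn (fun z => gammaPDFReal a r z * f z) (Ioi 0) := by
  have hm : Measurable (gammaPDF a r) := (measurable_gammaPDFReal a r).ennreal_ofReal
  rw [gammaMeasure, integrable_withDensity_iff_integrable_smul' hm
      (ae_of_all _ fun _ => ENNReal.ofReal_lt_top), ← integrableOn_Ici_iff_integrableOn_Ioi,
    integrableOn_iff_integrable_of_support_subset fun z hz => by
      by_contra h; exact hz (by simp [gammaPDFReal, show ¬0 ≤ z from h])]
  simp [gammaPDF, ENNReal.toReal_ofReal (gammaPDFReal_nonneg ha hr _)]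

lemma gammaPDFReal_mul_pow_mul_exp_neg_mul (a r c : ℝ) (j : ℕ) {z : ℝ} (hz : 0 < z) :
    gammaPDFReal a r z * (z ^ j * exp (-(c * z))) =
      r ^ a / Gamma a * (z ^ (a + j - 1) * exp (-((r + c) * z))) := by
  rw [gammaPDFReal, if_pos hz.le, show a + j - 1 = a - 1 + j by ring, rpow_add hz, rpow_natCast,
    add_mul, neg_add, exp_add]
  ring

variable {c : ℝ}

lemma integrable_pow_mul_exp_neg_mul_gammaMeasure (ha : 0 < a) (hr : 0 < r) (hrc : 0 < r + c)
    (j : ℕ) : Integrable (fun z => z ^ j * exp (-(c * z))) (gammaMeasure a r) := by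
  rw [integrable_gammaMeasure_iff ha hr]
  have hs : -1 < a + j - 1 := by linarith [j.cast_nonneg (α := ℝ)]
  refine IntegrableOn.congr_fun ((integrableOn_rpow_mul_exp_neg_mul_rpow hs one_pos hrc).const_mul
    (r ^ a / Gamma a)) (fun z hz => ?_) measurableSet_Ioi
  rw [gammaPDFReal_mul_pow_mul_exp_neg_mul a r c j hz, rpow_one, neg_mul]

lemma integral_pow_mul_exp_neg_mul_gammaMeasure (ha : 0 < a) (hr : 0 < r) (hrc : 0 < r + c)
    (j : ℕ) : ∫ z, z ^ j * exp (-(c * z)) ∂gammaMeasure a r =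
      r ^ a / Gamma a * Gamma (a + j) / (r + c) ^ (a + j) := by
  rw [integral_gammaMeasure ha hr, setIntegral_congr_fun measurableSet_Ioi
      fun z hz => gammaPDFReal_mul_pow_mul_exp_neg_mul a r c j hz, integral_const_mul,
    integral_rpow_mul_exp_neg_mul_Ioi (by positivity) hrc, div_rpow zero_le_one hrc.le, one_rpow]
  ring

end Moments

lemma integral_exp_neg_mul_sum_range_gammaMeasure {a r b : ℝ} (ha : 0 < a) (hr : 0 < r)
    (hb : 0 ≤ b) (m : ℕ) :
    ∫ z, exp (-(b * (z + 1))) * ∑ k ∈ range m, (b * (z + 1)) ^ k / (k ! : ℝ)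
        ∂gammaMeasure a r =
      exp (-b) * ∑ k ∈ range m, b ^ k / k ! * ∑ i ∈ range (k + 1),
        (k.choose i : ℝ) * (r ^ a / Gamma a * Gamma (a + i) / (r + b) ^ (a + i)) := by
  have hrb : 0 < r + b := by linarith
  have hint (i : ℕ) := integrable_pow_mul_exp_neg_mul_gammaMeasure ha hr hrb i
  simp_rw [exp_neg_mul_sum_range_add_one]
  rw [integral_finsetSum _ fun k _ => integrable_finsetSum _ fun i _ => (hint i).const_mul _,
    mul_sum]
  refine sum_congr rfl fun k _ => ?_
  rw [integral_finsetSum _ fun i _ => (hint i).const_mul _, mul_sum, mul_sum]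
  refine sum_congr rfl fun i _ => ?_
  rw [integral_const_mul, integral_pow_mul_exp_neg_mul_gammaMeasure ha hr hrb]
  ring

theorem IndepFun.measure_lt_eq_lintegral {Ω α : Type*} [MeasurableSpace Ω]
    [MeasurableSpace α] {μ : Measure Ω} [IsFiniteMeasure μ] {X : Ω → α} {Y : Ω → ℝ}
    (hXY : IndepFun X Y μ) (hX : Measurable X) (hY : Measurable Y) {f : α → ℝ}
    (hf : Measurable f) :
    μ {ω | f (X ω) < Y ω} = ∫⁻ x, μ.map Y (Ioi (f x)) ∂μ.map X := by
  have hs : MeasurableSet {p : α × ℝ | f p.1 < p.2} :=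
    measurableSet_lt (hf.comp measurable_fst) measurable_snd
  calc μ {ω | f (X ω) < Y ω} = μ.map (fun ω => (X ω, Y ω)) {p | f p.1 < p.2} :=
        (Measure.map_apply (hX.prodMk hY) hs).symm
    _ = ((μ.map X).prod (μ.map Y)) {p | f p.1 < p.2} := by
        rw [hXY.map_prod_eq_prod_map_map hX.aemeasurable hY.aemeasurable]
    _ = ∫⁻ x, μ.map Y (Ioi (f x)) ∂μ.map X := Measure.prod_apply hs

end ProbabilityTheory

/-- Evaluation of χ₂: for independent Gamma variables `W, Z`,
`P(W > θ(Z + 1))` in closed form. -/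
theorem chi_two_closed_form
    {Ω : Type*} [MeasurableSpace Ω] (μ : Measure Ω) [IsProbabilityMeasure μ]
    (m_w m_z : ℕ) (hmw : 0 < m_w) (hmz : 0 < m_z)
    (s_w s_z : ℝ) (hsw : 0 < s_w) (hsz : 0 < s_z)
    (W Z : Ω → ℝ) (hW : Measurable W) (hZ : Measurable Z)
    (hWd : μ.map W = gammaMeasure m_w (1 / s_w))
    (hZd : μ.map Z = gammaMeasure m_z (1 / s_z))
    (hindep : IndepFun W Z μ)
    (θ : ℝ) (hθ : 0 < θ) :
    (μ {ω | W ω > θ * (Z ω + 1)}).toReal =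
      Real.exp (-(θ / s_w)) *
        ∑ k ∈ Finset.range m_w, ((θ / s_w) ^ k / (Nat.factorial k : ℝ)) *
          ∑ k1 ∈ Finset.range (k + 1),
            (k.choose k1 : ℝ) *
            (Real.Gamma ((m_z : ℝ) + k1) / (Real.Gamma m_z * s_z ^ m_z)) *
            (θ / s_w + 1 / s_z) ^ (-((m_z : ℤ) + k1)) := by
  set G : ℝ → ℝ := fun z =>
    exp (-(θ / s_w * (z + 1))) * ∑ k ∈ range m_w, (θ / s_w * (z + 1)) ^ k / (k ! : ℝ)
  have hprob : μ {ω | W ω > θ * (Z ω + 1)} =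
      ∫⁻ z, ENNReal.ofReal (G z) ∂gammaMeasure m_z (1 / s_z) := by
    calc μ {ω | W ω > θ * (Z ω + 1)}
        = ∫⁻ z, gammaMeasure m_w (1 / s_w) (Ioi (θ * (z + 1)))
            ∂gammaMeasure m_z (1 / s_z) := by
          rw [← hWd, ← hZd]
          exact hindep.symm.measure_lt_eq_lintegral hZ hW (f := fun z => θ * (z + 1)) (by fun_prop)
      _ = _ := lintegral_congr_ae <| (ae_nonneg_gammaMeasure _ _).mono fun z hz => by
          dsimp only
          rw [gammaMeasure_Ioi_natCast hmw (by positivity) (by positivity),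
            show 1 / s_w * (θ * (z + 1)) = θ / s_w * (z + 1) by ring]
  have hG : 0 ≤ᵐ[gammaMeasure m_z (1 / s_z)] G :=
    (ae_nonneg_gammaMeasure _ _).mono fun z hz => by positivity
  rw [hprob, ← integral_eq_lintegral_of_nonneg_ae hG (by fun_prop),
    integral_exp_neg_mul_sum_range_gammaMeasure (by positivity) (by positivity) (by positivity)]
  refine congrArg _ (sum_congr rfl fun k _ => congrArg _ (sum_congr rfl fun i _ => ?_))
  have hcast : (m_z : ℝ) + i = ((m_z + i : ℕ) : ℝ) := by push_cast; ring
  rw [hcast, rpow_natCast, rpow_natCast, one_div_pow, add_comm (1 / s_z),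
    show -((m_z : ℤ) + i) = -((m_z + i : ℕ) : ℤ) by push_cast; ring, zpow_neg, zpow_natCast]
  field_simp
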